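/- Let Q be a finite quiver with exactly one arrow α : b → c where b ≠ c, and dimension vector d with d_b, d_c ≥ 1 (other vertices arbitrary). Then the moment map Φ(ρ)_a = √(-1)λ_a·id for a ∉ {b,c}, Φ(ρ)_b = √(-1)(λ_b·id − ρ*ρ), Φ(ρ)_c = √(-1)(λ_c·id + ρρ*), defined on 𝒜 = Hom(ℂ^{d_b}, ℂ^{d_c}), is proper. -/

import Mathlib

open Matrix

/-- The moment map `Φ_θ` for the action of `K = Π_a U(d_a)` on the representation space
`𝒜 = ⊕_α Hom(ℂ^{d(s α)}, ℂ^{d(t α)})` of a quiver, with `Lie(K)*` identified with the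
space of tuples of matrices via the trace inner product:
`Φ(ρ)_a = √-1 (λ_a·id + Σ_{t α = a} ρ_α ρ_α* − Σ_{s α = a} ρ_α* ρ_α)`. -/
noncomputable def quiverMomentMap {Q0 Q1 : Type} [Fintype Q1] [DecidableEq Q0]
    (s t : Q1 → Q0) (d : Q0 → ℕ) (lam : Q0 → ℝ)
    (ρ : ∀ α : Q1, Matrix (Fin (d (t α))) (Fin (d (s α))) ℂ) (a : Q0) :
    Matrix (Fin (d a)) (Fin (d a)) ℂ :=
  Complex.I • ((lam a : ℂ) • (1 : Matrix (Fin (d a)) (Fin (d a)) ℂ)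
    + (∑ α : Q1, if h : t α = a then h ▸ (ρ α * (ρ α)ᴴ) else 0)
    - (∑ α : Q1, if h : s α = a then h ▸ ((ρ α)ᴴ * ρ α) else 0))

/-! On the target vertex the moment map is `√-1 (λ_c + ρ ρ*)`, so
`-√-1 tr Φ(ρ)_c = λ_c d_c + Σ |ρ_ij|²`. Hence `ρ` is bounded by a continuous function of `Φ(ρ)`,
and the preimage of a compact set under the continuous map `Φ` is closed and bounded. -/

open scoped Matrix.Norms.Elementwise

theorem isCompact_preimage_of_norm_le {X Y : Type*} [SeminormedAddCommGroup X] [ProperSpace X]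
    [TopologicalSpace Y] [T2Space Y] {f : X → Y} (hf : Continuous f) {g : Y → ℝ}
    (hg : Continuous g) (hfg : ∀ x, ‖x‖ ≤ g (f x)) {K : Set Y} (hK : IsCompact K) :
    IsCompact (f ⁻¹' K) := by
  obtain ⟨M, hM⟩ := (hK.image hg).bddAbove
  exact Metric.isCompact_of_isClosed_isBounded (hK.isClosed.preimage hf)
    (isBounded_iff_forall_norm_le.2 ⟨M, fun x hx => (hfg x).trans (hM ⟨f x, hx, rfl⟩)⟩)

namespace Matrix

variable {𝕜 m n : Type*} [RCLike 𝕜] [Fintype m] [Fintype n]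

theorem re_trace_mul_conjTranspose (A : Matrix m n 𝕜) :
    RCLike.re (A * Aᴴ).trace = ∑ i, ∑ j, ‖A i j‖ ^ 2 := by
  simp [trace, mul_apply, RCLike.mul_conj]

theorem norm_le_sqrt_re_trace_mul_conjTranspose (A : Matrix m n 𝕜) :
    ‖A‖ ≤ √(RCLike.re (A * Aᴴ).trace) := by
  refine (norm_le_iff (Real.sqrt_nonneg _)).2 fun i j => Real.le_sqrt_of_sq_le ?_
  rw [re_trace_mul_conjTranspose]
  calc ‖A i j‖ ^ 2 ≤ ∑ j', ‖A i j'‖ ^ 2 :=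
        Finset.single_le_sum (f := fun j' => ‖A i j'‖ ^ 2)
          (fun _ _ => by positivity) (Finset.mem_univ j)
    _ ≤ ∑ i', ∑ j', ‖A i' j'‖ ^ 2 :=
        Finset.single_le_sum (f := fun i' => ∑ j', ‖A i' j'‖ ^ 2)
          (fun _ _ => by positivity) (Finset.mem_univ i)

end Matrix

theorem continuous_quiverMomentMap {Q0 Q1 : Type} [Fintype Q1] [DecidableEq Q0]
    (s t : Q1 → Q0) (d : Q0 → ℕ) (lam : Q0 → ℝ) :
    Continuous (quiverMomentMap s t d lam) := by
  refine continuous_pi fun a => ?_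
  unfold quiverMomentMap
  refine .fun_const_smul
    (.fun_sub (.fun_add continuous_const (continuous_finsetSum _ fun α _ => ?_))
      (continuous_finsetSum _ fun α _ => ?_)) _
  · by_cases h : t α = a
    · subst h
      simpa using (continuous_apply α).matrix_mul (continuous_apply α).matrix_conjTranspose
    · simpa [h] using continuous_const
  · by_cases h : s α = a
    · subst h
      simpa using (continuous_apply α).matrix_conjTranspose.matrix_mul (continuous_apply α)
    · simpa [h] using continuous_const

theorem quiverMomentMap_single_arrow_target {Q0 : Type} [DecidableEq Q0] {b c : Q0}
    (hbc : b ≠ c) (d : Q0 → ℕ) (lam : Q0 → ℝ)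
    (ρ : Unit → Matrix (Fin (d c)) (Fin (d b)) ℂ) :
    quiverMomentMap (fun _ => b) (fun _ => c) d lam ρ c =
      Complex.I • ((lam c : ℂ) • 1 + ρ () * (ρ ())ᴴ) := by
  simp [quiverMomentMap, hbc]

theorem moment_map_proper_single_arrow_general {Q0 : Type} [DecidableEq Q0]
    (b c : Q0) (hbc : b ≠ c) (d : Q0 → ℕ)
    (lam : Q0 → ℝ) :
    ∀ K : Set (∀ a : Q0, Matrix (Fin (d a)) (Fin (d a)) ℂ), IsCompact K →
      IsCompact
        (quiverMomentMap (fun _ : Unit => b) (fun _ : Unit => c) d lam ⁻¹' K) := by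
  intro K hK
  refine isCompact_preimage_of_norm_le (continuous_quiverMomentMap _ _ d lam)
    (g := fun y => √((-Complex.I * (y c).trace).re - lam c * d c)) (by fun_prop) (fun ρ => ?_) hK
  refine (pi_norm_le_iff_of_nonneg (Real.sqrt_nonneg _)).2 fun _ => ?_
  convert norm_le_sqrt_re_trace_mul_conjTranspose (ρ ()) using 3
  simp [quiverMomentMap_single_arrow_target hbc]

/-- Base case of the induction: for a finite quiver with exactly one arrow `α : b → c`
(`b ≠ c`, `d_b, d_c ≥ 1`), the moment map
`Φ(ρ)_a = √-1 λ_a·id` for `a ∉ {b,c}`, `Φ(ρ)_b = √-1(λ_b·id − ρ*ρ)`,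
`Φ(ρ)_c = √-1(λ_c·id + ρρ*)`, defined on `𝒜 = Hom(ℂ^{d_b}, ℂ^{d_c})`, is proper. -/
theorem moment_map_proper_single_arrow {Q0 : Type} [Fintype Q0] [DecidableEq Q0]
    (b c : Q0) (hbc : b ≠ c) (d : Q0 → ℕ) (hdb : 1 ≤ d b) (hdc : 1 ≤ d c)
    (lam : Q0 → ℝ) :
    ∀ K : Set (∀ a : Q0, Matrix (Fin (d a)) (Fin (d a)) ℂ), IsCompact K →
      IsCompact
        (quiverMomentMap (fun _ : Unit => b) (fun _ : Unit => c) d lam ⁻¹' K) :=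
  moment_map_proper_single_arrow_general b c hbc d lam
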